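/- arXiv:1903.10355 — 6 statements merged into one kernel-verified Lean document; each statement's English description precedes it below -/
import Mathlib

section
/- Let r, K, γ, μ, d1, d2, d3, α, β1, β2, β3 be positive real parameters, d1' = d1 + β1, d2' = d2 + β2, d3' = d3 − β3 with d3' > 0. Suppose Cs, Cm, T : [0,∞) → ℝ are differentiable functions satisfying Cs'(t) = r·Cs(t)·(1 − Cs(t)/K) − d1'·Cs(t), Cm'(t) = μ·Cs(t) − d2'·Cm(t) − γ·Cm(t)·T(t), T'(t) = α·Cm(t)·T(t) − d3'·T(t) for all t ≥ 0, with Cs(0) ≥ 0, Cm(0) ≥ 0, T(0) ≥ 0. Then Cs(t) ≥ 0, Cm(t) ≥ 0 and T(t) ≥ 0 for all t ≥ 0. -/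
open Set MeasureTheory intervalIntegral

/-- If `f' = q·f + p` with `p ≥ 0` on `[0,∞)`, `q` continuous, and `f 0 ≥ 0`, then
`f ≥ 0` on `[0,∞)`. -/
lemma nonneg_of_linear_ode (f q p : ℝ → ℝ)
    (hq : ContinuousOn q (Set.Ici 0))
    (hp : ∀ t ≥ (0:ℝ), 0 ≤ p t)
    (hf : ∀ t ≥ (0:ℝ), HasDerivWithinAt f (q t * f t + p t) (Set.Ici 0) t)
    (h0 : 0 ≤ f 0) : ∀ t ≥ (0:ℝ), 0 ≤ f t := by
  intro b hb
  set H : ℝ → ℝ := fun u => ∫ s in (0:ℝ)..u, q s with hHdef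
  have hqint : ∀ x ≥ (0:ℝ), IntervalIntegrable q volume 0 x := by
    intro x hx
    refine (hq.mono ?_).intervalIntegrable
    rw [Set.uIcc_of_le hx]
    exact fun y hy => hy.1
  have hHd : ∀ x ≥ (0:ℝ), HasDerivWithinAt H (q x) (Set.Ici x) x := by
    intro x hx
    refine intervalIntegral.integral_hasDerivWithinAt_right (hqint x hx) ?_ ?_
    · exact (hq.mono (Set.Ioi_subset_Ici_self.trans
        (Set.Ici_subset_Ici.mpr hx))).stronglyMeasurableAtFilter_nhdsWithin
        measurableSet_Ioi x
    · exact (hq x hx).mono (Set.Ioi_subset_Ici_self.trans (Set.Ici_subset_Ici.mpr hx))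
  have hHcont : ContinuousOn H (Set.Icc 0 b) := by
    have := intervalIntegral.continuousOn_primitive_interval' (hqint b hb)
      Set.left_mem_uIcc
    rwa [Set.uIcc_of_le hb] at this
  have hfcont : ContinuousOn f (Set.Icc 0 b) := by
    intro x hx
    exact ((hf x hx.1).continuousWithinAt).mono (fun y hy => hy.1)
  -- the auxiliary function g = f * exp(-H)
  set g : ℝ → ℝ := fun u => f u * Real.exp (-(H u)) with hgdef
  have hgcont : ContinuousOn g (Set.Icc 0 b) :=
    hfcont.mul (Real.continuous_exp.comp_continuousOn hHcont.neg)
  have hgd : ∀ x ∈ Set.Ico 0 b, HasDerivWithinAt g (p x * Real.exp (-(H x)))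
      (Set.Ici x) x := by
    intro x hx
    have h1 : HasDerivWithinAt f (q x * f x + p x) (Set.Ici x) x :=
      (hf x hx.1).mono (Set.Ici_subset_Ici.mpr hx.1)
    have h2 : HasDerivWithinAt (fun u => Real.exp (-(H u)))
        (Real.exp (-(H x)) * (-(q x))) (Set.Ici x) x := ((hHd x hx.1).neg).exp
    have := h1.mul h2
    exact this.congr_deriv (by ring)
  -- compare -g with the constant -g 0
  have key : ∀ x ∈ Set.Icc 0 b, -(g x) ≤ -(g 0) := by
    have := image_le_of_deriv_right_le_deriv_boundary
      (f := fun u => -(g u)) (f' := fun u => -(p u * Real.exp (-(H u))))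
      (a := 0) (b := b) (hgcont.neg)
      (fun x hx => (hgd x hx).neg)
      (B := fun _ => -(g 0)) (B' := fun _ => 0)
      le_rfl continuousOn_const
      (fun x _ => hasDerivWithinAt_const x _ _)
      (fun x hx => by
        have hnn := mul_nonneg (hp x hx.1) (Real.exp_pos (-(H x))).le
        show -(p x * Real.exp (-(H x))) ≤ 0
        linarith)
    exact this
  have hg0 : g 0 = f 0 := by
    simp [hgdef, hHdef, intervalIntegral.integral_same]
  have hgb : g 0 ≤ g b := by
    have := key b ⟨hb, le_rfl⟩
    linarith
  have : (0:ℝ) ≤ f b * Real.exp (-(H b)) := by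
    rw [hg0] at hgb; exact le_trans h0 hgb
  nlinarith [Real.exp_pos (-(H b))]

/-- Nonnegativity of solutions of the CML model. -/
theorem stmt_0 (r K γ μ d1 d2 d3 α β1 β2 β3 : ℝ)
    (hr : 0 < r) (hK : 0 < K) (hγ : 0 < γ) (hμ : 0 < μ)
    (hd1 : 0 < d1) (hd2 : 0 < d2) (hd3 : 0 < d3) (hα : 0 < α)
    (hβ1 : 0 < β1) (hβ2 : 0 < β2) (hβ3 : 0 < β3)
    (hd3' : 0 < d3 - β3)
    (Cs Cm T : ℝ → ℝ)
    (hCs : ∀ t ≥ (0:ℝ), HasDerivWithinAt Cs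
      (r * Cs t * (1 - Cs t / K) - (d1 + β1) * Cs t) (Set.Ici 0) t)
    (hCm : ∀ t ≥ (0:ℝ), HasDerivWithinAt Cm
      (μ * Cs t - (d2 + β2) * Cm t - γ * Cm t * T t) (Set.Ici 0) t)
    (hT : ∀ t ≥ (0:ℝ), HasDerivWithinAt T
      (α * Cm t * T t - (d3 - β3) * T t) (Set.Ici 0) t)
    (hCs0 : 0 ≤ Cs 0) (hCm0 : 0 ≤ Cm 0) (hT0 : 0 ≤ T 0) :
    ∀ t ≥ (0:ℝ), 0 ≤ Cs t ∧ 0 ≤ Cm t ∧ 0 ≤ T t := by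
  have hCsc : ContinuousOn Cs (Set.Ici 0) := fun x hx => (hCs x hx).continuousWithinAt
  have hCmc : ContinuousOn Cm (Set.Ici 0) := fun x hx => (hCm x hx).continuousWithinAt
  have hTc : ContinuousOn T (Set.Ici 0) := fun x hx => (hT x hx).continuousWithinAt
  have hCsnn : ∀ t ≥ (0:ℝ), 0 ≤ Cs t := by
    apply nonneg_of_linear_ode Cs (fun t => r * (1 - Cs t / K) - (d1 + β1)) (fun _ => 0)
    · exact ((continuousOn_const.mul (continuousOn_const.sub
        (hCsc.div_const K))).sub continuousOn_const)
    · intro t _; exact le_refl 0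
    · intro t ht
      have := hCs t ht
      convert this using 1
      ring
    · exact hCs0
  have hTnn : ∀ t ≥ (0:ℝ), 0 ≤ T t := by
    apply nonneg_of_linear_ode T (fun t => α * Cm t - (d3 - β3)) (fun _ => 0)
    · exact (continuousOn_const.mul hCmc).sub continuousOn_const
    · intro t _; exact le_refl 0
    · intro t ht
      have := hT t ht
      convert this using 1
      ring
    · exact hT0
  have hCmnn : ∀ t ≥ (0:ℝ), 0 ≤ Cm t := by
    apply nonneg_of_linear_ode Cm (fun t => -(d2 + β2) - γ * T t) (fun t => μ * Cs t)
    · exact continuousOn_const.sub (continuousOn_const.mul hTc)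
    · intro t ht; exact mul_nonneg hμ.le (hCsnn t ht)
    · intro t ht
      have := hCm t ht
      convert this using 1
      ring
    · exact hCm0
  exact fun t ht => ⟨hCsnn t ht, hCmnn t ht, hTnn t ht⟩
end

section
/- Let r, K > 0 and let y : [0,∞) → ℝ be a differentiable function with y(t) ≥ 0 for all t ≥ 0 and y'(t) ≤ r·y(t)·(1 − y(t)/K) for all t ≥ 0. Then limsup_{t→∞} y(t) ≤ K. -/
open Set Filter

/-- Logistic differential comparison: if `y ≥ 0` and `y' ≤ r·y·(1 - y/K)` on `[0,∞)`,
then `limsup_{t→∞} y(t) ≤ K`. -/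
theorem stmt_1 (r K : ℝ) (hr : 0 < r) (hK : 0 < K)
    (y y' : ℝ → ℝ)
    (hy : ∀ t ≥ (0:ℝ), HasDerivWithinAt y (y' t) (Set.Ici 0) t)
    (hnn : ∀ t ≥ (0:ℝ), 0 ≤ y t)
    (hineq : ∀ t ≥ (0:ℝ), y' t ≤ r * y t * (1 - y t / K)) :
    Filter.limsup y Filter.atTop ≤ K := by
  have hcont : ∀ a b : ℝ, 0 ≤ a → ContinuousOn y (Icc a b) := by
    intro a b ha
    intro x hx
    have hx0 : (0:ℝ) ≤ x := le_trans ha hx.1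
    exact ((hy x hx0).continuousWithinAt).mono (fun z hz => le_trans ha hz.1)
  have hderiv : ∀ a b : ℝ, 0 ≤ a → ∀ x ∈ Ico a b, HasDerivWithinAt y (y' x) (Ici x) x := by
    intro a b ha x hx
    exact (hy x (le_trans ha hx.1)).mono (fun z hz => le_trans (le_trans ha hx.1) hz)
  -- main eventual bound
  have key : ∀ ε > (0:ℝ), ∀ᶠ t in atTop, y t ≤ K + ε := by
    intro ε hε
    set c : ℝ := r * ε * (K + ε) / K with hc
    have hcpos : 0 < c := by positivity
    -- at points where y x > K + ε (x ≥ 0), y' x ≤ -c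
    have hdrop : ∀ x ≥ (0:ℝ), K + ε ≤ y x → y' x ≤ -c := by
      intro x hx hyx
      refine le_trans (hineq x hx) ?_
      have h1 : 1 - y x / K ≤ -(ε / K) := by
        have h2 : (K + ε) / K ≤ y x / K := by gcongr
        have h3 : (K + ε) / K = 1 + ε / K := by field_simp
        linarith
      have hyx0 : 0 < y x := lt_of_lt_of_le (by positivity) hyx
      calc r * y x * (1 - y x / K) ≤ r * y x * (-(ε / K)) := by
            apply mul_le_mul_of_nonneg_left h1 (by positivity)
        _ ≤ r * (K + ε) * (-(ε / K)) := by
            apply mul_le_mul_of_nonpos_right _ (neg_nonpos.2 (by positivity))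
            · exact mul_le_mul_of_nonneg_left hyx hr.le
        _ = -c := by rw [hc]; ring
    -- Step 2: there is T ≥ 0 with y T ≤ K + ε
    obtain ⟨T, hT0, hT⟩ : ∃ T ≥ (0:ℝ), y T ≤ K + ε := by
      by_contra h
      push_neg at h
      set b : ℝ := y 0 / c + 1 with hb
      have hb0 : 0 < b := by
        have := hnn 0 le_rfl
        positivity
      have := image_le_of_deriv_right_le_deriv_boundary (f := y) (f' := y')
        (B := fun t => y 0 + (-c) * t) (B' := fun _ => -c) (a := 0) (b := b)
        (hcont 0 b le_rfl) (hderiv 0 b le_rfl)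
        (by simp)
        (Continuous.continuousOn (by continuity))
        (fun x _ => by simpa using ((hasDerivWithinAt_id x (Ici x)).const_mul (-c)).const_add (y 0))
        (fun x hx => hdrop x hx.1 (h x hx.1).le)
        (right_mem_Icc.2 hb0.le)
      have hyb := hnn b hb0.le
      have hcb' : c * (y 0 / c) = y 0 := mul_div_cancel₀ _ hcpos.ne'
      have hlt : y 0 + (-c) * b < 0 := by
        rw [hb]
        nlinarith
      have this : y b ≤ y 0 + (-c) * b := this
      linarith
    -- Step 1: invariance: for all t ≥ T, y t ≤ K + ε
    have inv : ∀ t ≥ T, y t ≤ K + ε := by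
      intro t ht
      have := image_le_of_deriv_right_lt_deriv_boundary' (f := y) (f' := y')
        (B := fun _ => K + ε) (B' := fun _ => 0) (a := T) (b := t)
        (hcont T t hT0) (hderiv T t hT0)
        hT continuousOn_const
        (fun x _ => hasDerivWithinAt_const x _ _)
        (fun x hx hxeq => by
          have hd := hdrop x (le_trans hT0 hx.1) (le_of_eq hxeq.symm)
          show y' x < 0
          linarith)
        (right_mem_Icc.2 ht)
      exact this
    filter_upwards [eventually_ge_atTop T] with t ht using inv t ht
  have hcb : IsCoboundedUnder (· ≤ ·) atTop y := by
    apply isCoboundedUnder_le_of_eventually_le atTop (x := 0)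
    filter_upwards [eventually_ge_atTop (0:ℝ)] with t ht using hnn t ht
  refine le_of_forall_pos_le_add ?_
  intro ε hε
  exact Filter.limsup_le_of_le hcb (key ε hε)
end

section
/- Let r, K, γ, μ, d1, d2, d3, α, β1, β2, β3 be positive real parameters, d1' = d1 + β1, d2' = d2 + β2, d3' = d3 − β3 with d3' > 0. Suppose Cs, Cm, T : [0,∞) → ℝ are differentiable, satisfy the CML system Cs' = r·Cs·(1 − Cs/K) − d1'·Cs, Cm' = μ·Cs − d2'·Cm − γ·Cm·T, T' = α·Cm·T − d3'·T, are nonnegative for all t ≥ 0, and satisfy limsup_{t→∞} Cs(t) ≤ K. Then, with d23' = min(d2', d3'), one has limsup_{t→∞} Cm(t) ≤ μ·K/d23' and limsup_{t→∞} T(t) ≤ α·μ·K/(γ·d23'). -/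
open Filter Set Real

/-- Barrier lemma: if `f' ≤ 0` whenever `f ≥ B` and `f 0 ≤ B`, then `f ≤ B` on `[0,∞)`. -/
lemma aux_barrier {f f' : ℝ → ℝ} {B : ℝ}
    (hf : ∀ t ≥ (0:ℝ), HasDerivWithinAt f (f' t) (Set.Ici 0) t)
    (hf0 : f 0 ≤ B)
    (hB : ∀ t ≥ (0:ℝ), B ≤ f t → f' t ≤ 0) :
    ∀ t ≥ (0:ℝ), f t ≤ B := by
  intro t1 ht1
  by_contra hgt
  push_neg at hgt
  have hcont : ContinuousOn f (Set.Ici 0) := fun x hx => (hf x hx).continuousWithinAt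
  set S : Set ℝ := Set.Icc 0 t1 ∩ f ⁻¹' (Set.Iic B) with hS
  have hScl : IsClosed S :=
    (hcont.mono (Set.Icc_subset_Ici_self)).preimage_isClosed_of_isClosed isClosed_Icc isClosed_Iic
  have hSne : S.Nonempty := ⟨0, ⟨le_refl 0, ht1⟩, hf0⟩
  have hSbdd : BddAbove S := ⟨t1, fun x hx => hx.1.2⟩
  set s := sSup S with hs
  have hsS : s ∈ S := hScl.csSup_mem hSne hSbdd
  have hs0 : 0 ≤ s := hsS.1.1
  have hst1 : s ≤ t1 := hsS.1.2
  have hfs : f s ≤ B := hsS.2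
  have hsne : s ≠ t1 := fun h => (not_le.2 hgt) (h ▸ hfs)
  have hslt : s < t1 := lt_of_le_of_ne hst1 hsne
  have hgtIoc : ∀ u ∈ Set.Ioc s t1, B < f u := by
    intro u hu
    by_contra h
    push_neg at h
    have : u ∈ S := ⟨⟨hs0.trans hu.1.le, hu.2⟩, h⟩
    exact absurd (le_csSup hSbdd this) (not_le.2 hu.1)
  have hanti : AntitoneOn f (Set.Icc s t1) := by
    apply antitoneOn_of_hasDerivWithinAt_nonpos (convex_Icc s t1)
      (hcont.mono (Set.Icc_subset_Ici_self.trans (Set.Ici_subset_Ici.2 hs0))) (f' := f')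
    · intro x hx
      rw [interior_Icc] at hx
      refine (hf x (hs0.trans hx.1.le)).mono ?_
      rw [interior_Icc]
      exact fun y hy => le_trans hs0 hy.1.le
    · intro x hx
      rw [interior_Icc] at hx
      exact hB x (hs0.trans hx.1.le) (hgtIoc x ⟨hx.1, hx.2.le⟩).le
  have := hanti (Set.left_mem_Icc.2 hslt.le) (Set.right_mem_Icc.2 hslt.le) hslt.le
  linarith [hgt]

/-- Decay lemma: if `f' ≤ a - b f` on `[t0,∞)` with `b > 0`, then eventually `f ≤ a/b + δ`. -/
lemma aux_decay {f f' : ℝ → ℝ} {a b t0 : ℝ} (hb : 0 < b)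
    (hf : ∀ t ≥ t0, HasDerivWithinAt f (f' t) (Set.Ici t0) t)
    (hle : ∀ t ≥ t0, f' t ≤ a - b * f t) :
    ∀ δ > (0:ℝ), ∀ᶠ t in Filter.atTop, f t ≤ a / b + δ := by
  intro δ hδ
  set g : ℝ → ℝ := fun t => (f t - a / b) * Real.exp (b * t) with hg
  have hgderiv : ∀ t ≥ t0, HasDerivWithinAt g
      (f' t * Real.exp (b * t) + (f t - a / b) * (Real.exp (b * t) * (b * 1))) (Set.Ici t0) t := by
    intro t ht
    exact ((hf t ht).sub_const (a / b)).mul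
      (((hasDerivAt_id t).const_mul b).exp.hasDerivWithinAt)
  have hanti : AntitoneOn g (Set.Ici t0) := by
    apply antitoneOn_of_hasDerivWithinAt_nonpos (convex_Ici t0)
      (fun x hx => (hgderiv x hx).continuousWithinAt)
      (f' := fun t => f' t * Real.exp (b * t) + (f t - a / b) * (Real.exp (b * t) * (b * 1)))
    · intro x hx
      rw [interior_Ici] at hx
      exact (hgderiv x hx.le).mono interior_subset
    · intro x hx
      rw [interior_Ici] at hx
      have h1 := hle x hx.le
      have h2 := Real.exp_pos (b * x)
      have h3 : b * (a / b) = a := by field_simp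
      nlinarith [mul_le_mul_of_nonneg_right h1 h2.le]
  -- for t ≥ t0 : f t ≤ a/b + g t0 * exp (-(b*t))
  have hbound : ∀ t ≥ t0, f t ≤ a / b + g t0 * Real.exp (-(b * t)) := by
    intro t ht
    have h1 : g t ≤ g t0 := hanti (Set.self_mem_Ici) ht ht
    have h2 := Real.exp_pos (b * t)
    have h3 : Real.exp (-(b * t)) = (Real.exp (b * t))⁻¹ := by
      rw [Real.exp_neg]
    have h4 : f t - a / b ≤ g t0 / Real.exp (b * t) := by
      rw [le_div_iff₀ h2]
      exact h1
    rw [h3, ← div_eq_mul_inv]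
    linarith
  -- the exponential term tends to 0
  have htend : Filter.Tendsto (fun t => g t0 * Real.exp (-(b * t))) Filter.atTop (nhds 0) := by
    have h1 : Filter.Tendsto (fun t : ℝ => -(b * t)) Filter.atTop Filter.atBot :=
      tendsto_neg_atTop_atBot.comp (Filter.Tendsto.const_mul_atTop hb Filter.tendsto_id)
    have h2 := Real.tendsto_exp_atBot.comp h1
    have h3 := h2.const_mul (g t0)
    simpa using h3
  have hev : ∀ᶠ t in Filter.atTop, g t0 * Real.exp (-(b * t)) < δ :=
    htend.eventually_lt_const hδ
  filter_upwards [hev, Filter.eventually_ge_atTop t0] with t h1 h2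
  linarith [hbound t h2]

/-- Ultimate boundedness of the mature CML cells and the CTL population in the CML model. -/
theorem stmt_3 (r K γ μ d1 d2 d3 α β1 β2 β3 : ℝ)
    (hr : 0 < r) (hK : 0 < K) (hγ : 0 < γ) (hμ : 0 < μ)
    (hd1 : 0 < d1) (hd2 : 0 < d2) (hd3 : 0 < d3) (hα : 0 < α)
    (hβ1 : 0 < β1) (hβ2 : 0 < β2) (hβ3 : 0 < β3)
    (hd3' : 0 < d3 - β3)
    (Cs Cm T : ℝ → ℝ)
    (hCs : ∀ t ≥ (0:ℝ), HasDerivWithinAt Cs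
      (r * Cs t * (1 - Cs t / K) - (d1 + β1) * Cs t) (Set.Ici 0) t)
    (hCm : ∀ t ≥ (0:ℝ), HasDerivWithinAt Cm
      (μ * Cs t - (d2 + β2) * Cm t - γ * Cm t * T t) (Set.Ici 0) t)
    (hT : ∀ t ≥ (0:ℝ), HasDerivWithinAt T
      (α * Cm t * T t - (d3 - β3) * T t) (Set.Ici 0) t)
    (hnn : ∀ t ≥ (0:ℝ), 0 ≤ Cs t ∧ 0 ≤ Cm t ∧ 0 ≤ T t)
    (hCsK : Filter.limsup Cs Filter.atTop ≤ K) :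
    Filter.limsup Cm Filter.atTop ≤ μ * K / min (d2 + β2) (d3 - β3) ∧
    Filter.limsup T Filter.atTop ≤ α * μ * K / (γ * min (d2 + β2) (d3 - β3)) := by
  set b := min (d2 + β2) (d3 - β3) with hbdef
  have hb : 0 < b := lt_min (by linarith) hd3'
  have hb2 : b ≤ d2 + β2 := min_le_left _ _
  have hb3 : b ≤ d3 - β3 := min_le_right _ _
  -- Step 1: Cs is bounded above for all t ≥ 0
  set B := max (Cs 0) K with hBdef
  have hCsB : ∀ t ≥ (0:ℝ), Cs t ≤ B := by
    apply aux_barrier hCs (le_max_left _ _)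
    intro t ht hBle
    have hKle : K ≤ Cs t := le_trans (le_max_right _ _) hBle
    have h1 : 1 - Cs t / K ≤ 0 := by
      rw [sub_nonpos, le_div_iff₀ hK]
      linarith
    have h2 : 0 ≤ Cs t := (hnn t ht).1
    have h4 : 0 ≤ r * Cs t * (-(1 - Cs t / K)) :=
      mul_nonneg (mul_nonneg hr.le h2) (by linarith)
    have h5 : 0 ≤ (d1 + β1) * Cs t := mul_nonneg (by linarith) h2
    linarith
  have hCsbdd : Filter.IsBoundedUnder (· ≤ ·) Filter.atTop Cs :=
    ⟨B, (Filter.eventually_ge_atTop 0).mono fun t ht => hCsB t ht⟩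
  -- Step 2: key estimate on W = α Cm + γ T
  set W : ℝ → ℝ := fun t => α * Cm t + γ * T t with hWdef
  have key : ∀ δ > (0:ℝ), ∀ᶠ t in Filter.atTop, W t ≤ α * μ * K / b + δ := by
    intro δ hδ
    set ε := δ * b / (2 * (α * μ)) with hεdef
    have hε : 0 < ε := by positivity
    have hevCs : ∀ᶠ t in Filter.atTop, Cs t < K + ε :=
      Filter.eventually_lt_of_limsup_lt (lt_of_le_of_lt hCsK (by linarith)) hCsbdd
    obtain ⟨t1, ht1⟩ := Filter.eventually_atTop.1 hevCs
    set t0 := max t1 0 with ht0def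
    have ht0 : (0:ℝ) ≤ t0 := le_max_right _ _
    set a := α * μ * (K + ε) with hadef
    have hWev : ∀ᶠ t in Filter.atTop, W t ≤ a / b + δ / 2 := by
      apply aux_decay hb
        (f' := fun t => α * μ * Cs t - α * (d2 + β2) * Cm t - γ * (d3 - β3) * T t)
      · intro t ht
        have ht' : (0:ℝ) ≤ t := le_trans ht0 ht
        have h1 := ((hCm t ht').const_mul α).add ((hT t ht').const_mul γ)
        have heq : α * (μ * Cs t - (d2 + β2) * Cm t - γ * Cm t * T t)
            + γ * (α * Cm t * T t - (d3 - β3) * T t)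
            = α * μ * Cs t - α * (d2 + β2) * Cm t - γ * (d3 - β3) * T t := by ring
        rw [heq] at h1
        exact h1.mono (Set.Ici_subset_Ici.2 ht0)
      · intro t ht
        have ht' : (0:ℝ) ≤ t := le_trans ht0 ht
        have hCslt : Cs t < K + ε := ht1 t (le_trans (le_max_left _ _) ht)
        obtain ⟨_, hCmnn, hTnn⟩ := hnn t ht'
        have h2 : (d2 + β2 - b) * Cm t ≥ 0 := mul_nonneg (by linarith) hCmnn
        have h3 : (d3 - β3 - b) * T t ≥ 0 := mul_nonneg (by linarith) hTnn
        have h4 : α * μ * Cs t ≤ α * μ * (K + ε) :=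
          mul_le_mul_of_nonneg_left hCslt.le (by positivity)
        simp only [hWdef, hadef]
        nlinarith [mul_nonneg hα.le h2, mul_nonneg hγ.le h3]
      · linarith
    have heq2 : a / b + δ / 2 = α * μ * K / b + δ := by
      rw [hadef, hεdef]
      field_simp
      ring
    rwa [heq2] at hWev
  -- coboundedness facts
  have hCmcob : Filter.IsCoboundedUnder (· ≤ ·) Filter.atTop Cm :=
    Filter.isCoboundedUnder_le_of_eventually_le Filter.atTop
      ((Filter.eventually_ge_atTop 0).mono fun t ht => (hnn t ht).2.1)
  have hTcob : Filter.IsCoboundedUnder (· ≤ ·) Filter.atTop T :=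
    Filter.isCoboundedUnder_le_of_eventually_le Filter.atTop
      ((Filter.eventually_ge_atTop 0).mono fun t ht => (hnn t ht).2.2)
  constructor
  · apply le_of_forall_pos_le_add
    intro ε hε
    apply Filter.limsup_le_of_le hCmcob
    filter_upwards [key (α * ε) (by positivity), Filter.eventually_ge_atTop 0] with t h1 h2
    obtain ⟨_, hCmnn, hTnn⟩ := hnn t h2
    have hW : α * Cm t ≤ α * μ * K / b + α * ε := by
      have : γ * T t ≥ 0 := mul_nonneg hγ.le hTnn
      simp only [hWdef] at h1
      linarith
    have heq : α * (μ * K / b + ε) = α * μ * K / b + α * ε := by ring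
    rw [← heq] at hW
    exact le_of_mul_le_mul_left hW hα
  · apply le_of_forall_pos_le_add
    intro ε hε
    apply Filter.limsup_le_of_le hTcob
    filter_upwards [key (γ * ε) (by positivity), Filter.eventually_ge_atTop 0] with t h1 h2
    obtain ⟨_, hCmnn, hTnn⟩ := hnn t h2
    have hW : γ * T t ≤ α * μ * K / b + γ * ε := by
      have : α * Cm t ≥ 0 := mul_nonneg hα.le hCmnn
      simp only [hWdef] at h1
      linarith
    have heq : γ * (α * μ * K / (γ * b) + ε) = α * μ * K / b + γ * ε := by
      field_simp
    rw [← heq] at hW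
    exact le_of_mul_le_mul_left hW hγ
end

section
/- Let r, K, γ, μ, α > 0 and d1', d2', d3' > 0 with r > d1', and set C̄s = K(r − d1')/r, C̄m = μK(r − d1')/(r·d2') and P* = αμK(r − d1')/(r·d2'·d3'). The real 3×3 matrix J̄ = [[d1' − r, 0, 0], [μ, −d2', −γ·C̄m], [0, 0, α·C̄m − d3']] (the Jacobian of the CML vector field at the equilibrium Ē = (C̄s, C̄m, 0)) has eigenvalues exactly d1' − r, −d2', and (αμK(r − d1') − r·d2'·d3')/(r·d2'); consequently all eigenvalues of J̄ are negative if and only if P* < 1. -/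
/-- The Jacobian at the disease but CTL free equilibrium `Ē` has eigenvalues
`d1' - r`, `-d2'` and `(αμK(r - d1') - r·d2'·d3')/(r·d2')`; they are all negative
iff `P* < 1`. -/
theorem stmt_7 (r K γ μ α d1' d2' d3' : ℝ)
    (hr : 0 < r) (hK : 0 < K) (hγ : 0 < γ) (hμ : 0 < μ) (hα : 0 < α)
    (hd1' : 0 < d1') (hd2' : 0 < d2') (hd3' : 0 < d3')
    (hrd : d1' < r)
    (Cmbar : ℝ) (hCmbar : Cmbar = μ * K * (r - d1') / (r * d2'))
    (J : Matrix (Fin 3) (Fin 3) ℝ)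
    (hJ : J = !![d1' - r, 0, 0; μ, -d2', -γ * Cmbar; 0, 0, α * Cmbar - d3']) :
    spectrum ℝ J =
      {d1' - r, -d2', (α * μ * K * (r - d1') - r * d2' * d3') / (r * d2')} ∧
    ((∀ x ∈ spectrum ℝ J, x < 0) ↔
      α * μ * K * (r - d1') / (r * d2' * d3') < 1) := by
  have hrd2 : (0:ℝ) < r * d2' := by positivity
  have he3 : α * Cmbar - d3' = (α * μ * K * (r - d1') - r * d2' * d3') / (r * d2') := by
    rw [hCmbar]; field_simp
  have key : ∀ x : ℝ, x ∈ spectrum ℝ J ↔ (x = d1' - r ∨ x = -d2' ∨ x = α * Cmbar - d3') := by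
    intro x
    rw [spectrum.mem_iff, Matrix.isUnit_iff_isUnit_det, isUnit_iff_ne_zero, not_not,
      Matrix.det_fin_three]
    subst hJ
    simp [Matrix.algebraMap_matrix_apply, sub_eq_zero, mul_eq_zero, or_assoc,
      eq_neg_iff_add_eq_zero]
  constructor
  · ext x
    simp only [key, he3, Set.mem_insert_iff, Set.mem_singleton_iff]
  · constructor
    · intro h
      have h3 : α * Cmbar - d3' < 0 := by
        apply h; rw [key]; tauto
      rw [he3, div_neg_iff] at h3
      rw [div_lt_one (by positivity)]
      rcases h3 with ⟨_, h⟩ | ⟨h, _⟩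
      · linarith
      · linarith
    · intro h x hx
      rw [div_lt_one (by positivity)] at h
      rw [key] at hx
      rcases hx with rfl | rfl | rfl
      · linarith
      · linarith
      · rw [he3]
        apply div_neg_of_neg_of_pos _ hrd2
        linarith
end

section
/- Let r, K, γ, μ, α > 0 and d1', d2', d3' > 0 with r > d1' and P* = αμK(r − d1')/(r·d2'·d3') > 1. Set Cs* = K(r − d1')/r, Cm* = d3'/α, T* = (αμK(r − d1') − r·d2'·d3')/(r·γ·d3'), and define a0 = (rαγ/K)·Cs*·Cm*·T* + αμγ·Cs*·T*, a1 = (r·d2'/K)·Cs* + (rγ/K)·Cs*·T* + αγ·Cm*·T*, a2 = d2' + γ·T* + (r/K)·Cs*. Then a0 > 0, a1 > 0, a2 > 0 and a1·a2 > a0; consequently every complex root of the polynomial x³ + a2·x² + a1·x + a0 has negative real part. -/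
/-- Routh–Hurwitz conditions at the coexistent equilibrium `E*` when `r > d1'` and `P* > 1`:
the coefficients of the characteristic polynomial are positive with `a1·a2 > a0`, hence every
complex root of `x³ + a2x² + a1x + a0` has negative real part. -/
theorem stmt_8 (r K γ μ α d1' d2' d3' : ℝ)
    (hr : 0 < r) (hK : 0 < K) (hγ : 0 < γ) (hμ : 0 < μ) (hα : 0 < α)
    (hd1' : 0 < d1') (hd2' : 0 < d2') (hd3' : 0 < d3')
    (hrd : d1' < r)
    (hP : 1 < α * μ * K * (r - d1') / (r * d2' * d3'))
    (Cs Cm T a0 a1 a2 : ℝ)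
    (hCs : Cs = K * (r - d1') / r)
    (hCm : Cm = d3' / α)
    (hT : T = (α * μ * K * (r - d1') - r * d2' * d3') / (r * γ * d3'))
    (ha0 : a0 = (r * α * γ / K) * Cs * Cm * T + α * μ * γ * Cs * T)
    (ha1 : a1 = (r * d2' / K) * Cs + (r * γ / K) * Cs * T + α * γ * Cm * T)
    (ha2 : a2 = d2' + γ * T + (r / K) * Cs) :
    0 < a0 ∧ 0 < a1 ∧ 0 < a2 ∧ a0 < a1 * a2 ∧
    ∀ z : ℂ, z ^ 3 + (a2 : ℂ) * z ^ 2 + (a1 : ℂ) * z + (a0 : ℂ) = 0 → z.re < 0 := by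
  have hden : 0 < r * d2' * d3' := by positivity
  have hnum : r * d2' * d3' < α * μ * K * (r - d1') := by
    rw [lt_div_iff₀ hden] at hP; linarith
  have hCsp : 0 < Cs := by
    rw [hCs]; exact div_pos (mul_pos hK (by linarith)) hr
  have hCmp : 0 < Cm := by rw [hCm]; positivity
  have hTp : 0 < T := by
    rw [hT]; exact div_pos (by linarith) (by positivity)
  have ha0p : 0 < a0 := by rw [ha0]; positivity
  have ha1p : 0 < a1 := by rw [ha1]; positivity
  have ha2p : 0 < a2 := by rw [ha2]; positivity
  -- equilibrium relation μ Cs = d2' Cm + γ Cm T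
  have heq : μ * Cs = d2' * Cm + γ * Cm * T := by
    rw [hCs, hCm, hT]
    field_simp
    ring
  have key0 : a1 * a2 - a0 = (r/K*Cs)*d2'^2 + 2*(r/K*Cs)*d2'*(γ*T)
      + (r/K*Cs)^2*d2' + (r/K*Cs)*(γ*T)^2 + (r/K*Cs)^2*(γ*T) := by
    rw [ha0, ha1, ha2]
    linear_combination (-(α*γ*T)) * heq
  have hlt : a0 < a1 * a2 := by
    have h1 : 0 < (r/K*Cs)*d2'^2 := by positivity
    have h2 : 0 ≤ 2*(r/K*Cs)*d2'*(γ*T) := by positivity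
    have h3 : 0 ≤ (r/K*Cs)^2*d2' := by positivity
    have h4 : 0 ≤ (r/K*Cs)*(γ*T)^2 := by positivity
    have h5 : 0 ≤ (r/K*Cs)^2*(γ*T) := by positivity
    linarith
  refine ⟨ha0p, ha1p, ha2p, hlt, ?_⟩
  clear hCs hCm hT ha0 ha1 ha2 heq hnum hden hP hCsp hCmp hTp hrd key0
  clear hr hK hγ hμ hα hd1' hd2' hd3' r K γ μ α d1' d2' d3' Cs Cm T
  intro z hz
  by_contra hre
  push_neg at hre
  set x := z.re with hx
  set y := z.im with hy
  have hRe : x^3 - 3*x*y^2 + a2*(x^2 - y^2) + a1*x + a0 = 0 := by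
    have h1 := congrArg Complex.re hz
    simp only [Complex.add_re, Complex.mul_re, Complex.ofReal_re, Complex.ofReal_im,
      pow_succ, pow_zero, one_mul, Complex.mul_im, Complex.zero_re] at h1
    linarith [h1]
  have hIm : y * (3*x^2 - y^2 + 2*a2*x + a1) = 0 := by
    have h1 := congrArg Complex.im hz
    simp only [Complex.add_im, Complex.mul_re, Complex.ofReal_re, Complex.ofReal_im,
      pow_succ, pow_zero, one_mul, Complex.mul_im, Complex.zero_im] at h1
    linarith [h1]
  rcases mul_eq_zero.mp hIm with hy0 | hq
  · rw [hy0] at hRe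
    have h1 : 0 ≤ x^3 := pow_nonneg hre 3
    have h2 : 0 ≤ a2*(x^2 - 0^2) := by simpa using mul_nonneg ha2p.le (sq_nonneg x)
    have h3 : 0 ≤ a1*x := mul_nonneg ha1p.le hre
    nlinarith [hRe]
  · have hy2 : y^2 = 3*x^2 + 2*a2*x + a1 := by linarith
    have key : 8*x^3 + 8*a2*x^2 + 2*(a1 + a2^2)*x + (a1*a2 - a0) = 0 := by
      linear_combination -hRe - (3*x + a2) * hy2
    have h1 : 0 ≤ 8*x^3 := by positivity
    have h2 : 0 ≤ 8*a2*x^2 := by positivity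
    have h3 : 0 ≤ 2*(a1 + a2^2)*x := by positivity
    linarith
end

section
/- Let n ≥ 1 be a real number, let a > 0 and b > 0, and let y : [0,∞) → ℝ be a differentiable function with y(t) ≥ 1 for all t ≥ 0 which satisfies y'(t) ≤ n·a·y(t) − n·b·(y(t))^{(n+1)/n} for all t ≥ 0. Then limsup_{t→∞} y(t) ≤ (a/b)ⁿ. -/
open Filter Set

/-- Bernoulli-type differential inequality: if `y ≥ 1` and
`y' ≤ n·a·y - n·b·y^((n+1)/n)` on `[0,∞)`, then `limsup_{t→∞} y(t) ≤ (a/b)ⁿ`. -/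
theorem stmt_12 (n a b : ℝ) (hn : 1 ≤ n) (ha : 0 < a) (hb : 0 < b)
    (y y' : ℝ → ℝ)
    (hy : ∀ t ≥ (0:ℝ), HasDerivWithinAt y (y' t) (Set.Ici 0) t)
    (h1 : ∀ t ≥ (0:ℝ), 1 ≤ y t)
    (hineq : ∀ t ≥ (0:ℝ), y' t ≤ n * a * y t - n * b * y t ^ ((n + 1) / n)) :
    Filter.limsup y Filter.atTop ≤ (a / b) ^ n := by
  have hn0 : (0:ℝ) < n := lt_of_lt_of_le one_pos hn
  set M : ℝ := (a / b) ^ n with hM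
  have hab : (0:ℝ) < a / b := div_pos ha hb
  have hM0 : 0 < M := Real.rpow_pos_of_pos hab n
  have hcont : ContinuousOn y (Set.Ici 0) := fun t ht => (hy t ht).continuousWithinAt
  have key : ∀ K, M < K → ∀ᶠ t in atTop, y t ≤ K := by
    intro K hK
    have hK0 : 0 < K := hM0.trans hK
    have hroot : a / b < K ^ (1/n) := by
      have h2 : M ^ (1/n) < K ^ (1/n) :=
        Real.rpow_lt_rpow hM0.le hK (by positivity)
      have h3 : M ^ (1/n) = a / b := by
        rw [hM, ← Real.rpow_mul hab.le, mul_one_div_cancel hn0.ne', Real.rpow_one]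
      linarith
    set c : ℝ := b * K ^ (1/n) - a with hc
    have hc0 : 0 < c := by
      have := (div_lt_iff₀ hb).mp hroot
      simp only [hc]; nlinarith
    set δ : ℝ := n * c with hδ
    have hδ0 : 0 < δ := mul_pos hn0 hc0
    -- wherever y ≥ K, the derivative is at most -δ
    have hder : ∀ u, 0 ≤ u → K ≤ y u → y' u ≤ -δ := by
      intro u hu hKu
      have hyu1 : 1 ≤ y u := h1 u hu
      have hyu0 : (0:ℝ) < y u := lt_of_lt_of_le one_pos hyu1
      have hsplit : y u ^ ((n+1)/n) = y u * y u ^ (1/n) := by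
        have he : (n+1)/n = 1 + 1/n := by field_simp
        rw [he, Real.rpow_add hyu0, Real.rpow_one]
      have hmono : K ^ (1/n) ≤ y u ^ (1/n) :=
        Real.rpow_le_rpow hK0.le hKu (by positivity)
      have hineq' := hineq u hu
      rw [hsplit] at hineq'
      have hprod : 0 ≤ n * b * y u * (y u ^ (1/n) - K ^ (1/n)) := by
        apply mul_nonneg (by positivity) (by linarith)
      have hK1 : (0:ℝ) < K ^ (1/n) := Real.rpow_pos_of_pos hK0 _
      -- y' u ≤ n y (a - b y^{1/n}) ≤ n y (a - b K^{1/n}) = -n c y ≤ -n c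
      have hc0' : 0 < n * (b * K ^ (1/n) - a) := by
        rw [hδ, hc] at hδ0; exact hδ0
      rw [hδ, hc]
      nlinarith [mul_le_mul_of_nonneg_left hyu1 hc0'.le]
    -- Step A: y eventually reaches K
    have stepA : ∃ t0 ≥ (0:ℝ), y t0 ≤ K := by
      by_contra h
      push_neg at h
      set T : ℝ := y 0 / δ with hT
      have hy0 : 1 ≤ y 0 := h1 0 le_rfl
      have hT0 : 0 ≤ T := div_nonneg (by linarith) hδ0.le
      have hanti : AntitoneOn (fun u => y u + δ * u) (Set.Icc 0 T) := by
        apply antitoneOn_of_hasDerivWithinAt_nonpos (convex_Icc 0 T)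
          (f' := fun u => y' u + δ)
        · exact (hcont.mono Set.Icc_subset_Ici_self).add
            (Continuous.continuousOn (by continuity))
        · intro x hx
          rw [interior_Icc] at hx
          have hx0 : (0:ℝ) ≤ x := hx.1.le
          have h1' : HasDerivWithinAt y (y' x) (interior (Set.Icc 0 T)) x := by
            rw [interior_Icc]
            exact (hy x hx0).mono (fun u hu => hu.1.le)
          have h2' : HasDerivWithinAt (fun u => δ * u) δ (interior (Set.Icc 0 T)) x := by
            simpa using ((hasDerivWithinAt_id x _).const_mul δ)
          exact h1'.add h2'
        · intro x hx
          rw [interior_Icc] at hx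
          have := hder x hx.1.le (h x hx.1.le).le
          linarith
      have hfin := hanti (Set.left_mem_Icc.2 hT0) (Set.right_mem_Icc.2 hT0) hT0
      simp only at hfin
      have hδT : δ * T = y 0 := by rw [hT]; field_simp [hδ0.ne']
      have := h1 T hT0
      have := h T hT0
      linarith
    obtain ⟨t0, ht0, hyt0⟩ := stepA
    -- Step B: once below K, stays below K
    filter_upwards [eventually_ge_atTop t0] with t ht
    by_contra hyt
    push_neg at hyt
    have hst' : t0 < t := lt_of_le_of_ne ht (fun h => by rw [← h] at hyt; linarith)
    set S : Set ℝ := {u | u ∈ Set.Icc t0 t ∧ y u ≤ K} with hS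
    have hSsub : S ⊆ Set.Icc t0 t := fun u hu => hu.1
    have hSne : S.Nonempty := ⟨t0, ⟨le_rfl, ht⟩, hyt0⟩
    have hSbdd : BddAbove S := ⟨t, fun u hu => hu.1.2⟩
    have hSclosed : IsClosed S := by
      have : S = Set.Icc t0 t ∩ y ⁻¹' Set.Iic K := rfl
      rw [this]
      exact ContinuousOn.preimage_isClosed_of_isClosed
        (hcont.mono (Set.Icc_subset_Ici_self.trans (by
          intro u hu; exact le_trans ht0 hu))) isClosed_Icc isClosed_Iic
    set s : ℝ := sSup S with hs
    have hsS : s ∈ S := hSclosed.csSup_mem hSne hSbdd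
    have hs0 : 0 ≤ s := le_trans ht0 hsS.1.1
    have hst : s < t := lt_of_le_of_ne hsS.1.2 (fun h => by
      rw [h] at hsS; linarith [hsS.2])
    have hgt : ∀ u, s < u → u ≤ t → K < y u := by
      intro u hsu hut
      by_contra hle
      push_neg at hle
      have hmem : u ∈ S := ⟨⟨hsS.1.1.trans hsu.le, hut⟩, hle⟩
      exact absurd (le_csSup hSbdd hmem) (not_le.2 hsu)
    have hanti : StrictAntiOn y (Set.Icc s t) := by
      apply strictAntiOn_of_hasDerivWithinAt_neg (convex_Icc s t)
        (hcont.mono (fun u hu => le_trans hs0 hu.1)) (f' := y')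
      · intro x hx
        rw [interior_Icc] at hx
        rw [interior_Icc]
        exact (hy x (hs0.trans hx.1.le)).mono
          (fun u hu => (hs0.trans hu.1.le))
      · intro x hx
        rw [interior_Icc] at hx
        have := hder x (hs0.trans hx.1.le) (hgt x hx.1 hx.2.le).le
        linarith
    have hlt : y t < y s :=
      hanti (Set.left_mem_Icc.2 hst.le) (Set.right_mem_Icc.2 hst.le) hst
    linarith [hsS.2]
  -- conclude
  have hbd : Filter.IsBoundedUnder (· ≥ ·) Filter.atTop y :=
    ⟨1, by
      rw [Filter.eventually_map]
      exact (eventually_ge_atTop (0:ℝ)).mono fun t ht => h1 t ht⟩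
  have hcob : Filter.IsCoboundedUnder (· ≤ ·) Filter.atTop y :=
    hbd.isCoboundedUnder_le
  exact le_of_forall_gt_imp_ge_of_dense fun K hK => Filter.limsup_le_of_le hcob (key K hK)
end
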